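/- arXiv:2205.08479 — 4 statements merged into one kernel-verified Lean document; each statement's English description precedes it below -/
import Mathlib

section
/- For i.i.d. geometric(p) random variables T_1,...,T_M with q = 1-p, define K = the largest k ∈ {0,...,M} such that max_{j≤k} T_j < max_{j} T_j and max_j T_j ≥ k (with appropriate conventions). Then P(K ≥ k) = Σ_{i=k}^{∞} (1-q^{i-1})^{k-1} [ (1-q^i)^{M-k+1} - (1-q^{i-1})^{M-k+1} ] for 1 ≤ k ≤ M. -/
/-!
Write `W = max_j T_j`, `V = max_{j < k-1} T_j` and `F n = 1 - q^n` for the geometric CDF.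
Split the event according to the value `i ≥ k` of `W`: `{V < W, W = i}` is the box
`{T_j ≤ i - 1 for j < k - 1, T_j ≤ i otherwise}` minus the box `{T_j ≤ i - 1 for all j}`.
By independence a box has probability a product of values of `F`, so the `i`-th term is
`F(i-1)^(k-1) F(i)^(M-k+1) - F(i-1)^M`.
-/

open MeasureTheory ProbabilityTheory

section

open Finset Function

variable {Ω : Type*} [MeasurableSpace Ω] {μ : Measure Ω}

lemma measureReal_iUnion {ι : Type*} [Countable ι] [IsFiniteMeasure μ] {s : ι → Set Ω}
    (hd : Pairwise (Disjoint on s)) (hs : ∀ i, MeasurableSet (s i)) :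
    μ.real (⋃ i, s i) = ∑' i, μ.real (s i) := by
  simp only [measureReal_def, measure_iUnion hd hs,
    ENNReal.tsum_toReal_eq fun i => measure_ne_top μ (s i)]

lemma measureReal_eq_tsum_inter_fiber [IsFiniteMeasure μ] {s : Set Ω} (hs : MeasurableSet s)
    {W : Ω → ℕ} (hW : Measurable W) : μ.real s = ∑' i, μ.real (s ∩ W ⁻¹' {i}) := by
  have hdisj : Pairwise (Disjoint on fun i => s ∩ W ⁻¹' {i}) := fun i j hij =>
    (pairwise_disjoint_fiber W hij).mono Set.inter_subset_right Set.inter_subset_right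
  rw [← measureReal_iUnion hdisj fun i => hs.inter (hW (measurableSet_singleton i)),
    ← Set.inter_iUnion]
  congr
  ext ω
  simp

lemma ProbabilityTheory.iIndepFun.measureReal_iInter_preimage {ι : Type*} [Fintype ι]
    {β : ι → Type*} {m : ∀ i, MeasurableSpace (β i)} {X : ∀ i, Ω → β i} (h : iIndepFun X μ)
    {S : ∀ i, Set (β i)} (hS : ∀ i, MeasurableSet (S i)) :
    μ.real (⋂ i, X i ⁻¹' S i) = ∏ i, μ.real (X i ⁻¹' S i) := by
  simp only [measureReal_def, ← ENNReal.toReal_prod,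
    ← h.measure_inter_preimage_eq_mul univ fun i _ => hS i, mem_univ, Set.iInter_true]

lemma Finset.sup_filter_lt_sup_and_sup_eq_iff {ι : Type*} [Fintype ι] (P : ι → Prop)
    [DecidablePred P] (f : ι → ℕ) {i : ℕ} (hi : 1 ≤ i) :
    (univ.filter P).sup f < univ.sup f ∧ univ.sup f = i ↔
      (∀ j, f j ≤ if P j then i - 1 else i) ∧ ¬ ∀ j, f j ≤ i - 1 := by
  constructor
  · rintro ⟨hlt, rfl⟩
    refine ⟨fun j => ?_, fun h => ?_⟩
    · split_ifs with hj
      · have := le_sup (f := f) (mem_filter.2 ⟨mem_univ j, hj⟩)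
        omega
      · exact le_sup (mem_univ j)
    · have := Finset.sup_le (s := univ) fun j _ => h j
      omega
  · rintro ⟨hbox, hnot⟩
    obtain ⟨j₀, hj₀⟩ := not_forall.1 hnot
    have hsup : univ.sup f = i := by
      refine le_antisymm (Finset.sup_le fun j _ => ?_) ?_
      · have := hbox j
        split_ifs at this <;> omega
      · have := le_sup (f := f) (mem_univ j₀)
        omega
    have hfilter : (univ.filter P).sup f ≤ i - 1 := Finset.sup_le fun j hj => by
      simpa [(mem_filter.1 hj).2] using hbox j
    exact ⟨by omega, hsup⟩

lemma Fin.prod_ite_val_lt {α : Type*} [CommMonoid α] (M m : ℕ) (x y : α) :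
    ∏ j : Fin M, (if (j : ℕ) < m then x else y) = x ^ min M m * y ^ (M - m) := by
  rw [prod_ite, Finset.prod_const, Finset.prod_const, Fin.card_filter_val_lt, filter_not,
    card_sdiff_of_subset (filter_subset _ _), Fin.card_filter_val_lt, card_univ, Fintype.card_fin]
  congr 2
  omega

lemma measureReal_setOf_le_of_geometric [IsProbabilityMeasure μ] {p : ℝ} (hp : 0 < p)
    (hp1 : p ≤ 1) {X : Ω → ℕ} (hX : Measurable X)
    (hgeom : ∀ n, 1 ≤ n → μ {ω | X ω = n} = ENNReal.ofReal (p * (1 - p) ^ (n - 1))) (n : ℕ) :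
    μ.real {ω | X ω ≤ n} = 1 - (1 - p) ^ n := by
  have hq0 : 0 ≤ 1 - p := by linarith
  have htail : {ω | n < X ω} = ⋃ m : ℕ, {ω | X ω = n + 1 + m} := by
    ext ω
    simp only [Set.mem_ofPred_eq, Set.mem_iUnion]
    exact ⟨fun h => ⟨X ω - (n + 1), by omega⟩, fun ⟨m, hm⟩ => by omega⟩
  have hdisj : Pairwise (Disjoint on fun m : ℕ => {ω | X ω = n + 1 + m}) := fun a b hab =>
    Set.disjoint_left.2 fun ω ha hb => hab (by simp only [Set.mem_ofPred_eq] at ha hb; omega)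
  have hfiber (m : ℕ) : μ.real {ω | X ω = n + 1 + m} = p * (1 - p) ^ n * (1 - p) ^ m := by
    rw [measureReal_def, hgeom _ (by omega), ENNReal.toReal_ofReal (by positivity),
      show n + 1 + m - 1 = n + m by omega, pow_add, mul_assoc]
  calc μ.real {ω | X ω ≤ n} = 1 - μ.real {ω | n < X ω} := by
        rw [← probReal_compl_eq_one_sub (measurableSet_lt measurable_const hX)]
        congr
        ext
        simp
    _ = 1 - ∑' m : ℕ, p * (1 - p) ^ n * (1 - p) ^ m := by
        rw [htail, measureReal_iUnion hdisj fun m => hX (measurableSet_singleton _)]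
        simp_rw [hfiber]
    _ = 1 - (1 - p) ^ n := by
        rw [tsum_mul_left, tsum_geometric_of_lt_one hq0 (by linarith), sub_sub_cancel,
          mul_right_comm, mul_inv_cancel₀ hp.ne', one_mul]

lemma measureReal_setOf_forall_le_of_geometric [IsProbabilityMeasure μ] {p : ℝ} (hp : 0 < p)
    (hp1 : p ≤ 1) {ι : Type*} [Fintype ι] {X : ι → Ω → ℕ} (hX : ∀ j, Measurable (X j))
    (hindep : iIndepFun X μ)
    (hgeom : ∀ j, ∀ n, 1 ≤ n → μ {ω | X j ω = n} = ENNReal.ofReal (p * (1 - p) ^ (n - 1)))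
    (a : ι → ℕ) : μ.real {ω | ∀ j, X j ω ≤ a j} = ∏ j, (1 - (1 - p) ^ a j) := by
  simpa [Set.preimage, Set.iInter_ofPred,
    measureReal_setOf_le_of_geometric hp hp1 (hX _) (hgeom _)] using
    hindep.measureReal_iInter_preimage (S := fun j => Set.Iic (a j)) fun _ => measurableSet_Iic

lemma measureReal_setOf_sup_filter_lt_sup_and_sup_eq [IsProbabilityMeasure μ] {p : ℝ}
    (hp : 0 < p) (hp1 : p ≤ 1) {M : ℕ} {T : Fin M → Ω → ℕ} (hT : ∀ j, Measurable (T j))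
    (hindep : iIndepFun T μ)
    (hgeom : ∀ j, ∀ n, 1 ≤ n → μ {ω | T j ω = n} = ENNReal.ofReal (p * (1 - p) ^ (n - 1)))
    {m : ℕ} (hm : m ≤ M) {i : ℕ} (hi : 1 ≤ i) :
    μ.real {ω | ((univ.filter fun j : Fin M => (j : ℕ) < m).sup fun j => T j ω)
        < (univ.sup fun j => T j ω) ∧ (univ.sup fun j => T j ω) = i} =
      (1 - (1 - p) ^ (i - 1)) ^ m *
        ((1 - (1 - p) ^ i) ^ (M - m) - (1 - (1 - p) ^ (i - 1)) ^ (M - m)) := by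
  have hevent : {ω | ((univ.filter fun j : Fin M => (j : ℕ) < m).sup fun j => T j ω)
        < (univ.sup fun j => T j ω) ∧ (univ.sup fun j => T j ω) = i} =
      {ω | ∀ j, T j ω ≤ if (j : ℕ) < m then i - 1 else i} \ {ω | ∀ j, T j ω ≤ i - 1} := by
    ext ω
    exact Finset.sup_filter_lt_sup_and_sup_eq_iff (fun j : Fin M => (j : ℕ) < m) _ hi
  have hsub : {ω | ∀ j, T j ω ≤ i - 1} ⊆
      {ω | ∀ j : Fin M, T j ω ≤ if (j : ℕ) < m then i - 1 else i} :=
    fun ω h j => (h j).trans (by split_ifs <;> omega)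
  have hsplit : (1 - (1 - p) ^ (i - 1)) ^ M =
      (1 - (1 - p) ^ (i - 1)) ^ m * (1 - (1 - p) ^ (i - 1)) ^ (M - m) := by
    rw [← pow_add, Nat.add_sub_cancel' hm]
  rw [hevent, measureReal_sdiff hsub (by measurability),
    measureReal_setOf_forall_le_of_geometric hp hp1 hT hindep hgeom,
    measureReal_setOf_forall_le_of_geometric hp hp1 hT hindep hgeom]
  simp only [apply_ite fun n : ℕ => 1 - (1 - p) ^ n]
  rw [Fin.prod_ite_val_lt, Finset.prod_const, card_univ, Fintype.card_fin, hsplit,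
    min_eq_right hm]
  ring

end

theorem prob_opportunistic_advance_general
    {Ω : Type*} [MeasurableSpace Ω] (μ : Measure Ω) [IsProbabilityMeasure μ]
    (M : ℕ) (p : ℝ) (hp : 0 < p) (hp1 : p ≤ 1)
    (T : Fin M → Ω → ℕ) (hmeas : ∀ i, Measurable (T i))
    (hindep : iIndepFun T μ)
    (hgeom : ∀ i, ∀ n : ℕ, 1 ≤ n →
      μ {ω | T i ω = n} = ENNReal.ofReal (p * (1 - p) ^ (n - 1)))
    (k : ℕ) (hk : 1 ≤ k) (hkM : k ≤ M) (q : ℝ) (hq : q = 1 - p) :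
    (μ {ω | ((Finset.univ.filter fun j : Fin M => (j : ℕ) < k - 1).sup fun j => T j ω)
              < (Finset.univ.sup fun j => T j ω)
            ∧ k ≤ Finset.univ.sup fun j => T j ω}).toReal
      = ∑' i : ℕ, if k ≤ i then
          (1 - q ^ (i - 1)) ^ (k - 1) *
            ((1 - q ^ i) ^ (M - k + 1) - (1 - q ^ (i - 1)) ^ (M - k + 1))
        else 0 := by
  subst hq
  rw [← measureReal_def, measureReal_eq_tsum_inter_fiber (by measurability)
    (by fun_prop : Measurable fun ω => Finset.univ.sup fun j => T j ω)]
  refine tsum_congr fun i => ?_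
  split_ifs with hki
  · rw [show M - k + 1 = M - (k - 1) by omega,
      ← measureReal_setOf_sup_filter_lt_sup_and_sup_eq hp hp1 hmeas hindep hgeom
        (by omega : k - 1 ≤ M) (by omega : 1 ≤ i)]
    congr 1
    ext ω
    simp only [Set.mem_inter_iff, Set.mem_ofPred_eq, Set.mem_preimage, Set.mem_singleton_iff]
    rw [and_right_comm, and_iff_left_of_imp fun h => h.2 ▸ hki]
  · convert measureReal_empty (μ := μ)
    exact Set.eq_empty_of_forall_notMem fun ω ⟨⟨_, hkW⟩, hWi⟩ => hki (hWi ▸ hkW)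

/-- For i.i.d. geometric(p) generation times `T_1, ..., T_M` (support {1,2,...}),
with `W = max_j T_j` and `W_{k-1} = max_{j ≤ k-1} T_j`, the probability that the
opportunistic advance `K` is at least `k` (i.e. `W_{k-1} < W` and `W ≥ k`) is
`∑_{i=k}^∞ (1-q^{i-1})^{k-1} [(1-q^i)^{M-k+1} - (1-q^{i-1})^{M-k+1}]` where `q = 1-p`. -/
theorem prob_opportunistic_advance
    {Ω : Type*} [MeasurableSpace Ω] (μ : Measure Ω) [IsProbabilityMeasure μ]
    (M : ℕ) (hM : 1 ≤ M) (p : ℝ) (hp : 0 < p) (hp1 : p ≤ 1)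
    (T : Fin M → Ω → ℕ) (hmeas : ∀ i, Measurable (T i))
    (hindep : iIndepFun T μ)
    (hgeom : ∀ i, ∀ n : ℕ, 1 ≤ n →
      μ {ω | T i ω = n} = ENNReal.ofReal (p * (1 - p) ^ (n - 1)))
    (k : ℕ) (hk : 1 ≤ k) (hkM : k ≤ M) (q : ℝ) (hq : q = 1 - p) :
    (μ {ω | ((Finset.univ.filter fun j : Fin M => (j : ℕ) < k - 1).sup fun j => T j ω)
              < (Finset.univ.sup fun j => T j ω)
            ∧ k ≤ Finset.univ.sup fun j => T j ω}).toReal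
      = ∑' i : ℕ, if k ≤ i then
          (1 - q ^ (i - 1)) ^ (k - 1) *
            ((1 - q ^ i) ^ (M - k + 1) - (1 - q ^ (i - 1)) ^ (M - k + 1))
        else 0 :=
  prob_opportunistic_advance_general μ M p hp hp1 T hmeas hindep hgeom k hk hkM q hq
end

section
/- Under the definitions of W^k_{ij} (degrees of opportunism) and Ŵ^r_{ij} (search depths) for nonnegative reals T_{ij}, the sandwich chain holds: max_{i≤M} Σ_{j≤N} T_{ij} = Ŵ^0_N ≤ Ŵ^1_N ≤ ... ≤ Ŵ^M_N = W_N = W^1_N ≤ W^2_N ≤ ... ≤ W^M_N = Σ_{j≤N} max_{i≤M} T_{ij}. -/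
/-
All three waiting times are instances of one max-plus recursion
`w i (j+1) = max_{m ∈ S i} (w m j + T m (j+1))`, differing only in the window `S i` of links
searched from link `i`.  This recursion is monotone in the window, which gives both chains of
inequalities, and it is unchanged by altering windows outside a set of links that the windows
never leave, which gives the middle equalities.  The two ends are the extreme windows: the
singleton `{i}` (no search, row sums) and the full range `[1, M]` (column maxima).
-/

open Finset

/-- 1-opportunistic waiting time recursion. -/
noncomputable def oppW (T : ℕ → ℕ → NNReal) : ℕ → ℕ → NNReal
  | _, 0 => 0
  | i, j + 1 => (Finset.Icc 1 i).sup fun k => oppW T k j + T k (j + 1)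
termination_by i j => j

/-- k-opportunistic waiting time recursion. -/
noncomputable def oppWk (T : ℕ → ℕ → NNReal) (M k : ℕ) : ℕ → ℕ → NNReal
  | _, 0 => 0
  | i, j + 1 => (Finset.Icc 1 (min (i + k - 1) M)).sup fun m => oppWk T M k m j + T m (j + 1)
termination_by i j => j

/-- Search-depth-r waiting time recursion. -/
noncomputable def oppWh (T : ℕ → ℕ → NNReal) (r : ℕ) : ℕ → ℕ → NNReal
  | _, 0 => 0
  | i, j + 1 => (Finset.Icc (max 1 (i - r)) i).sup fun m => oppWh T r m j + T m (j + 1)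
termination_by i j => j

noncomputable def windowWait (T : ℕ → ℕ → NNReal) (S : ℕ → Finset ℕ) : ℕ → ℕ → NNReal
  | _, 0 => 0
  | i, j + 1 => (S i).sup fun m => windowWait T S m j + T m (j + 1)

namespace windowWait

variable {T : ℕ → ℕ → NNReal} {S S' : ℕ → Finset ℕ}

@[simp] theorem zero_right (i : ℕ) : windowWait T S i 0 = 0 := by
  rw [windowWait]

theorem succ_right (i j : ℕ) :
    windowWait T S i (j + 1) = (S i).sup fun m => windowWait T S m j + T m (j + 1) := by
  rw [windowWait]

theorem le_of_subset {i i' : ℕ} (h : S i ⊆ S i') (j : ℕ) :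
    windowWait T S i j ≤ windowWait T S i' j := by
  cases j with
  | zero => simp
  | succ j => simpa only [succ_right] using Finset.sup_mono h

theorem mono_window {A : Set ℕ} (hA : ∀ i ∈ A, ∀ m ∈ S i, m ∈ A)
    (hS : ∀ i ∈ A, S i ⊆ S' i) (j : ℕ) :
    ∀ i ∈ A, windowWait T S i j ≤ windowWait T S' i j := by
  induction j with
  | zero => simp
  | succ j ih =>
    intro i hi
    rw [succ_right, succ_right]
    calc (S i).sup (fun m => windowWait T S m j + T m (j + 1))
        ≤ (S i).sup (fun m => windowWait T S' m j + T m (j + 1)) :=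
          Finset.sup_mono_fun fun m hm => add_le_add_left (ih m (hA i hi m hm)) _
      _ ≤ (S' i).sup (fun m => windowWait T S' m j + T m (j + 1)) := Finset.sup_mono (hS i hi)

theorem congr_window {A : Set ℕ} (hA : ∀ i ∈ A, ∀ m ∈ S i, m ∈ A)
    (hS : ∀ i ∈ A, S i = S' i) (j : ℕ) {i : ℕ} (hi : i ∈ A) :
    windowWait T S i j = windowWait T S' i j :=
  le_antisymm (mono_window hA (fun i hi => (hS i hi).le) j i hi)
    (mono_window (fun i hi => hS i hi ▸ hA i hi) (fun i hi => (hS i hi).ge) j i hi)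

theorem singleton_window (i j : ℕ) :
    windowWait T (fun i => {i}) i j = ∑ l ∈ Icc 1 j, T i l := by
  induction j with
  | zero => simp
  | succ j ih => rw [succ_right, sup_singleton, ih, sum_Icc_succ_top (Nat.le_add_left 1 j)]

theorem const_window {s : Finset ℕ} (hs : s.Nonempty) (i j : ℕ) :
    windowWait T (fun _ => s) i j = ∑ l ∈ Icc 1 j, s.sup fun m => T m l := by
  induction j generalizing i with
  | zero => simp
  | succ j ih =>
    simp only [succ_right, ih, sum_Icc_succ_top (Nat.le_add_left 1 j), Finset.add_sup hs]

end windowWait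

theorem oppW_eq_windowWait (T : ℕ → ℕ → NNReal) :
    oppW T = windowWait T (fun i => Icc 1 i) := by
  funext i j
  induction j generalizing i with
  | zero => rw [oppW, windowWait]
  | succ j ih => rw [oppW, windowWait.succ_right]; simp only [ih]

theorem oppWk_eq_windowWait (T : ℕ → ℕ → NNReal) (M k : ℕ) :
    oppWk T M k = windowWait T (fun i => Icc 1 (min (i + k - 1) M)) := by
  funext i j
  induction j generalizing i with
  | zero => rw [oppWk, windowWait]
  | succ j ih => rw [oppWk, windowWait.succ_right]; simp only [ih]

theorem oppWh_eq_windowWait (T : ℕ → ℕ → NNReal) (r : ℕ) :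
    oppWh T r = windowWait T (fun i => Icc (max 1 (i - r)) i) := by
  funext i j
  induction j generalizing i with
  | zero => rw [oppWh, windowWait]
  | succ j ih => rw [oppWh, windowWait.succ_right]; simp only [ih]

section

variable {T : ℕ → ℕ → NNReal} {M i : ℕ}

theorem oppWh_zero_eq_sum (hi : 1 ≤ i) (j : ℕ) : oppWh T 0 i j = ∑ l ∈ Icc 1 j, T i l := by
  rw [oppWh_eq_windowWait, windowWait.congr_window (A := Set.Ici 1) (S' := fun i => {i})
    (by intro i hi m; simp only [mem_Icc, Set.mem_Ici]; omega)
    (fun i hi => by rw [Nat.sub_zero, max_eq_right hi, Icc_self]) j hi,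
    windowWait.singleton_window]

theorem oppWh_mono {r r' : ℕ} (h : r ≤ r') (i j : ℕ) : oppWh T r i j ≤ oppWh T r' i j := by
  rw [oppWh_eq_windowWait, oppWh_eq_windowWait]
  exact windowWait.mono_window (A := Set.univ) (by simp)
    (fun i _ => Icc_subset_Icc_left (by omega)) j i trivial

theorem oppWh_eq_oppW_of_le {r : ℕ} (hi : i ≤ r) (j : ℕ) : oppWh T r i j = oppW T i j := by
  rw [oppWh_eq_windowWait, oppW_eq_windowWait]
  exact windowWait.congr_window (A := Set.Iic r)
    (by intro i hi m; simp only [mem_Icc, Set.mem_Iic] at *; omega)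
    (fun i hi => by rw [Nat.sub_eq_zero_of_le hi, Nat.max_zero]) j hi

theorem oppW_mono_left {i i' : ℕ} (h : i ≤ i') (j : ℕ) : oppW T i j ≤ oppW T i' j := by
  rw [oppW_eq_windowWait]
  exact windowWait.le_of_subset (Icc_subset_Icc_right h) j

theorem oppWk_one_eq_oppW (hi : i ≤ M) (j : ℕ) : oppWk T M 1 i j = oppW T i j := by
  rw [oppWk_eq_windowWait, oppW_eq_windowWait]
  exact windowWait.congr_window (A := Set.Iic M)
    (by intro i hi m; simp only [mem_Icc, Set.mem_Iic] at *; omega)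
    (fun i hi => by rw [Nat.add_sub_cancel, min_eq_left hi]) j hi

theorem oppWk_mono {k k' : ℕ} (h : k ≤ k') (i j : ℕ) : oppWk T M k i j ≤ oppWk T M k' i j := by
  rw [oppWk_eq_windowWait, oppWk_eq_windowWait]
  exact windowWait.mono_window (A := Set.univ) (by simp)
    (fun i _ => Icc_subset_Icc_right (by omega)) j i trivial

theorem oppWk_eq_sum_sup_of_le {k : ℕ} (hM : 1 ≤ M) (hk : M ≤ k) (hi : 1 ≤ i) (j : ℕ) :
    oppWk T M k i j = ∑ l ∈ Icc 1 j, (Icc 1 M).sup fun m => T m l := by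
  rw [oppWk_eq_windowWait, windowWait.congr_window (A := Set.Ici 1)
    (S' := fun _ => Icc 1 M) (by intro i hi m; simp only [mem_Icc, Set.mem_Ici] at *; omega)
    (fun i hi => by rw [min_eq_right (by simp only [Set.mem_Ici] at hi; omega)]) j hi,
    windowWait.const_window (nonempty_Icc.2 hM)]

end

theorem sandwich_chain_general (M N : ℕ) (hM : 1 ≤ M) (T : ℕ → ℕ → NNReal) :
    ((Finset.Icc 1 M).sup fun i => ∑ j ∈ Finset.Icc 1 N, T i j)
        = ((Finset.Icc 1 M).sup fun i => oppWh T 0 i N)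
    ∧ (∀ r, r < M →
        ((Finset.Icc 1 M).sup fun i => oppWh T r i N)
          ≤ (Finset.Icc 1 M).sup fun i => oppWh T (r + 1) i N)
    ∧ ((Finset.Icc 1 M).sup fun i => oppWh T M i N) = oppW T M N
    ∧ oppW T M N = oppWk T M 1 M N
    ∧ (∀ k, 1 ≤ k → k < M → oppWk T M k M N ≤ oppWk T M (k + 1) M N)
    ∧ oppWk T M M M N = ∑ j ∈ Finset.Icc 1 N, (Finset.Icc 1 M).sup fun i => T i j := by
  have hWh_top : ((Icc 1 M).sup fun i => oppWh T M i N) = oppW T M N :=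
    calc ((Icc 1 M).sup fun i => oppWh T M i N)
        = (Icc 1 M).sup fun i => oppW T i N :=
          sup_congr rfl fun i hi => oppWh_eq_oppW_of_le (mem_Icc.1 hi).2 N
      _ = oppW T M N :=
          le_antisymm (Finset.sup_le fun i hi => oppW_mono_left (mem_Icc.1 hi).2 N)
            (le_sup (f := fun i => oppW T i N) (mem_Icc.2 ⟨hM, le_rfl⟩))
  exact ⟨sup_congr rfl fun i hi => (oppWh_zero_eq_sum (mem_Icc.1 hi).1 N).symm,
    fun r _ => sup_mono_fun fun i _ => oppWh_mono r.le_succ i N,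
    hWh_top,
    (oppWk_one_eq_oppW le_rfl N).symm,
    fun k _ _ => oppWk_mono k.le_succ M N,
    oppWk_eq_sum_sup_of_le hM le_rfl hM N⟩

/-- The sandwich chain: `max_{i≤M} ∑_{j≤N} T_{ij} = Ŵ^0_N ≤ Ŵ^1_N ≤ ⋯ ≤ Ŵ^M_N
= W_N = W^1_N ≤ W^2_N ≤ ⋯ ≤ W^M_N = ∑_{j≤N} max_{i≤M} T_{ij}`, where
`Ŵ^r_N = max_{i≤M} Ŵ^r_{iN}` and `W^k_N = W^k_{MN}`. -/
theorem sandwich_chain (M N : ℕ) (hM : 1 ≤ M) (hN : 1 ≤ N) (T : ℕ → ℕ → NNReal) :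
    ((Finset.Icc 1 M).sup fun i => ∑ j ∈ Finset.Icc 1 N, T i j)
        = ((Finset.Icc 1 M).sup fun i => oppWh T 0 i N)
    ∧ (∀ r, r < M →
        ((Finset.Icc 1 M).sup fun i => oppWh T r i N)
          ≤ (Finset.Icc 1 M).sup fun i => oppWh T (r + 1) i N)
    ∧ ((Finset.Icc 1 M).sup fun i => oppWh T M i N) = oppW T M N
    ∧ oppW T M N = oppWk T M 1 M N
    ∧ (∀ k, 1 ≤ k → k < M → oppWk T M k M N ≤ oppWk T M (k + 1) M N)
    ∧ oppWk T M M M N = ∑ j ∈ Finset.Icc 1 N, (Finset.Icc 1 M).sup fun i => T i j :=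
  sandwich_chain_general M N hM T
end

section
/- For D ∈ ℝ^{N×M}, define D_0 = 0 ∈ ℝ^M and D_i = Θ_r^k(D_{i-1}, row_i(D)) for 1 ≤ i ≤ N, where Θ_r^k(a,b)_i = max_{max(1,i-r) ≤ j ≤ min(i+k-1,M)} (|a_j| + |b_j|). Then Λ_r^k(D) := ‖D_N‖_∞ defines a norm on the space of N×M real matrices: Λ_r^k(D) = 0 iff D = 0, Λ_r^k(αD) = |α| Λ_r^k(D), and Λ_r^k(C+D) ≤ Λ_r^k(C) + Λ_r^k(D). -/
/-- The operator `Θ_r^k : ℝ^M × ℝ^M → ℝ^M` defined (with 1-based indices) by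
`Θ_r^k(a,b)_i = max_{max(1,i-r) ≤ j ≤ min(i+k-1,M)} (|a_j| + |b_j|)`. -/
noncomputable def Theta (M r k : ℕ) (hk : 1 ≤ k) (a b : Fin M → ℝ) : Fin M → ℝ :=
  fun i =>
    (Finset.univ.filter fun j : Fin M =>
        (i : ℕ) + 1 - r ≤ (j : ℕ) + 1 ∧ (j : ℕ) + 1 ≤ (i : ℕ) + k).sup'
      ⟨i, Finset.mem_filter.mpr ⟨Finset.mem_univ i, Nat.sub_le _ _, by omega⟩⟩
      fun j => |a j| + |b j|

/-- The vectors `D_0 = 0`, `D_i = Θ_r^k(D_{i-1}, row_i D)` built from the rows of an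
`N × M` matrix `D`. -/
noncomputable def thetaSeq (M r k : ℕ) (hk : 1 ≤ k) {N : ℕ}
    (D : Fin N → Fin M → ℝ) : ℕ → Fin M → ℝ
  | 0 => 0
  | i + 1 =>
    if h : i < N then Theta M r k hk (thetaSeq M r k hk D i) (D ⟨i, h⟩)
    else thetaSeq M r k hk D i

/-- `Λ_r^k(D) = ‖D_N‖_∞` (sup norm of the final vector of the recursion). -/
noncomputable def Lam (M r k : ℕ) (hk : 1 ≤ k) {N : ℕ} (D : Fin N → Fin M → ℝ) : ℝ :=
  ‖thetaSeq M r k hk D N‖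

/-! Every coordinate of `Θ_r^k(a, b)` is a maximum of `|a_j| + |b_j|` over a window of indices,
so `Θ_r^k` is monotone in `|a|, |b|`, positively homogeneous and subadditive; by induction on the
rows the same holds for the vectors `D_n`. Since `|D_{m,i}| ≤ (D_N)_i`, the functional vanishes
only at `D = 0`. -/

section Theta

variable {M r k : ℕ} {hk : 1 ≤ k} {a b a' b' : Fin M → ℝ} {i : Fin M}

lemma Theta_le_iff {C : ℝ} :
    Theta M r k hk a b i ≤ C ↔
      ∀ j : Fin M, (i : ℕ) + 1 - r ≤ (j : ℕ) + 1 → (j : ℕ) + 1 ≤ (i : ℕ) + k →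
        |a j| + |b j| ≤ C := by
  simp [Theta, Finset.sup'_le_iff]

lemma abs_add_abs_le_Theta {j : Fin M} (hlo : (i : ℕ) + 1 - r ≤ (j : ℕ) + 1)
    (hhi : (j : ℕ) + 1 ≤ (i : ℕ) + k) : |a j| + |b j| ≤ Theta M r k hk a b i :=
  Theta_le_iff.1 le_rfl j hlo hhi

lemma abs_add_abs_self_le_Theta : |a i| + |b i| ≤ Theta M r k hk a b i :=
  abs_add_abs_le_Theta (Nat.sub_le _ _) (by omega)

lemma Theta_nonneg : 0 ≤ Theta M r k hk a b i :=
  (by positivity : (0 : ℝ) ≤ |a i| + |b i|).trans abs_add_abs_self_le_Theta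

lemma Theta_mono (ha : ∀ j, |a j| ≤ |a' j|) (hb : ∀ j, |b j| ≤ |b' j|) :
    Theta M r k hk a b i ≤ Theta M r k hk a' b' i :=
  Theta_le_iff.2 fun j hlo hhi =>
    (add_le_add (ha j) (hb j)).trans (abs_add_abs_le_Theta hlo hhi)

lemma Theta_add_le :
    Theta M r k hk (a + a') (b + b') i ≤ Theta M r k hk a b i + Theta M r k hk a' b' i :=
  Theta_le_iff.2 fun j hlo hhi =>
    calc |a j + a' j| + |b j + b' j| ≤ (|a j| + |b j|) + (|a' j| + |b' j|) := by
          linarith [abs_add_le (a j) (a' j), abs_add_le (b j) (b' j)]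
      _ ≤ _ := add_le_add (abs_add_abs_le_Theta hlo hhi) (abs_add_abs_le_Theta hlo hhi)

lemma Theta_abs_smul_smul (α : ℝ) :
    Theta M r k hk (|α| • a) (α • b) = |α| • Theta M r k hk a b := by
  funext i
  simp only [Theta, Pi.smul_apply, smul_eq_mul]
  refine (Finset.sup'_congr _ rfl fun j _ => ?_).trans
    (Finset.mul₀_sup' (abs_nonneg α) _ _ _).symm
  rw [abs_mul, abs_mul, abs_abs, mul_add]

end Theta

section thetaSeq

variable {M r k : ℕ} {hk : 1 ≤ k} {N : ℕ} (C D : Fin N → Fin M → ℝ)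

lemma thetaSeq_succ_of_lt {n : ℕ} (hn : n < N) :
    thetaSeq M r k hk D (n + 1) = Theta M r k hk (thetaSeq M r k hk D n) (D ⟨n, hn⟩) :=
  dif_pos hn

lemma thetaSeq_succ_of_le {n : ℕ} (hn : N ≤ n) :
    thetaSeq M r k hk D (n + 1) = thetaSeq M r k hk D n :=
  dif_neg (Nat.not_lt.2 hn)

lemma thetaSeq_nonneg (n : ℕ) : 0 ≤ thetaSeq M r k hk D n := by
  cases n with
  | zero => exact le_rfl
  | succ n =>
    rcases lt_or_ge n N with hn | hn
    · rw [thetaSeq_succ_of_lt D hn]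
      exact fun i => Theta_nonneg
    · rw [thetaSeq_succ_of_le D hn]
      exact thetaSeq_nonneg n

lemma monotone_thetaSeq : Monotone (thetaSeq M r k hk D) := by
  refine monotone_nat_of_le_succ fun n => ?_
  rcases lt_or_ge n N with hn | hn
  · rw [thetaSeq_succ_of_lt D hn]
    intro i
    calc thetaSeq M r k hk D n i ≤ |thetaSeq M r k hk D n i| + |D ⟨n, hn⟩ i| := by
          linarith [le_abs_self (thetaSeq M r k hk D n i), abs_nonneg (D ⟨n, hn⟩ i)]
      _ ≤ _ := abs_add_abs_self_le_Theta
  · rw [thetaSeq_succ_of_le D hn]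

lemma abs_le_thetaSeq (m : Fin N) (i : Fin M) : |D m i| ≤ thetaSeq M r k hk D N i :=
  calc |D m i| ≤ |thetaSeq M r k hk D m i| + |D m i| := le_add_of_nonneg_left (abs_nonneg _)
    _ ≤ thetaSeq M r k hk D (m + 1) i := by
      rw [thetaSeq_succ_of_lt D m.isLt]
      exact abs_add_abs_self_le_Theta
    _ ≤ thetaSeq M r k hk D N i := monotone_thetaSeq D m.isLt i

lemma thetaSeq_smul (α : ℝ) (n : ℕ) :
    thetaSeq M r k hk (α • D) n = |α| • thetaSeq M r k hk D n := by
  induction n with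
  | zero => simp [thetaSeq]
  | succ n ih =>
    rcases lt_or_ge n N with hn | hn
    · rw [thetaSeq_succ_of_lt _ hn, thetaSeq_succ_of_lt _ hn, ih]
      exact Theta_abs_smul_smul α
    · rw [thetaSeq_succ_of_le _ hn, thetaSeq_succ_of_le _ hn, ih]

lemma thetaSeq_add_le (n : ℕ) :
    thetaSeq M r k hk (C + D) n ≤ thetaSeq M r k hk C n + thetaSeq M r k hk D n := by
  induction n with
  | zero => simp [thetaSeq]
  | succ n ih =>
    rcases lt_or_ge n N with hn | hn
    · rw [thetaSeq_succ_of_lt _ hn, thetaSeq_succ_of_lt _ hn, thetaSeq_succ_of_lt _ hn]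
      intro i
      refine le_trans (Theta_mono (fun j => ?_) fun j => le_rfl) Theta_add_le
      rw [abs_of_nonneg (thetaSeq_nonneg _ n j), Pi.add_apply, abs_of_nonneg
        (add_nonneg (thetaSeq_nonneg C n j) (thetaSeq_nonneg D n j))]
      exact ih j
    · simpa only [thetaSeq_succ_of_le _ hn] using ih

end thetaSeq

lemma pi_norm_le_pi_norm_of_nonneg {ι : Type*} [Fintype ι] {f g : ι → ℝ} (hf : 0 ≤ f)
    (hfg : f ≤ g) : ‖f‖ ≤ ‖g‖ :=
  (pi_norm_le_iff_of_nonneg (norm_nonneg g)).2 fun i =>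
    calc ‖f i‖ = f i := Real.norm_of_nonneg (hf i)
      _ ≤ g i := hfg i
      _ ≤ ‖g‖ := (le_abs_self (g i)).trans (norm_le_pi_norm g i)

theorem lam_is_norm_general (M r k : ℕ) (hk : 1 ≤ k)
    (N : ℕ) :
    (∀ D : Fin N → Fin M → ℝ, Lam M r k hk D = 0 ↔ D = 0)
    ∧ (∀ (α : ℝ) (D : Fin N → Fin M → ℝ), Lam M r k hk (α • D) = |α| * Lam M r k hk D)
    ∧ (∀ C D : Fin N → Fin M → ℝ, Lam M r k hk (C + D) ≤ Lam M r k hk C + Lam M r k hk D)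
    := by
  have homogeneous (α : ℝ) (D : Fin N → Fin M → ℝ) :
      Lam M r k hk (α • D) = |α| * Lam M r k hk D := by
    rw [Lam, thetaSeq_smul, norm_smul, Real.norm_eq_abs, abs_abs, Lam]
  refine ⟨fun D => ⟨fun h => ?_, ?_⟩, homogeneous, fun C D => ?_⟩
  · have hzero : thetaSeq M r k hk D N = 0 := norm_eq_zero.1 h
    funext m i
    have hbound := abs_le_thetaSeq (r := r) (hk := hk) D m i
    rw [hzero] at hbound
    exact abs_nonpos_iff.1 hbound
  · rintro rfl
    simpa using homogeneous 0 0
  · calc Lam M r k hk (C + D) ≤ ‖thetaSeq M r k hk C N + thetaSeq M r k hk D N‖ :=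
          pi_norm_le_pi_norm_of_nonneg (thetaSeq_nonneg _ N) (thetaSeq_add_le C D N)
      _ ≤ Lam M r k hk C + Lam M r k hk D := norm_add_le _ _

/-- `Λ_r^k` is a norm on `N × M` real matrices: it is definite, absolutely
homogeneous, and satisfies the triangle inequality. -/
theorem lam_is_norm (M r k : ℕ) (hM : 1 ≤ M) (hr : r ≤ M) (hk : 1 ≤ k) (hkM : k ≤ M)
    (N : ℕ) (hN : 1 ≤ N) :
    (∀ D : Fin N → Fin M → ℝ, Lam M r k hk D = 0 ↔ D = 0)
    ∧ (∀ (α : ℝ) (D : Fin N → Fin M → ℝ), Lam M r k hk (α • D) = |α| * Lam M r k hk D)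
    ∧ (∀ C D : Fin N → Fin M → ℝ, Lam M r k hk (C + D) ≤ Lam M r k hk C + Lam M r k hk D) :=
  lam_is_norm_general M r k hk N
end

section
/- For D ∈ ℝ^{N×M} with the recursion D_i = Θ_r^k(D_{i-1}, row_i(D)) and G = C + D, one has the entrywise inequality (G_i)_j ≤ (C_i)_j + (D_i)_j for all 1 ≤ i ≤ N, 1 ≤ j ≤ M. -/
/-- Entrywise subadditivity of the recursion: with `G = C + D`,
`(G_i)_j ≤ (C_i)_j + (D_i)_j` for all `1 ≤ i ≤ N` and `1 ≤ j ≤ M`. -/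
theorem thetaSeq_entrywise_subadditive (M r k : ℕ) (hM : 1 ≤ M) (hr : r ≤ M)
    (hk : 1 ≤ k) (hkM : k ≤ M) (N : ℕ) (C D : Fin N → Fin M → ℝ) :
    ∀ i : ℕ, 1 ≤ i → i ≤ N → ∀ j : Fin M,
      thetaSeq M r k hk (C + D) i j
        ≤ thetaSeq M r k hk C i j + thetaSeq M r k hk D i j := by
  have key : ∀ i : ℕ, ∀ j : Fin M,
      |thetaSeq M r k hk (C + D) i j|
        ≤ thetaSeq M r k hk C i j + thetaSeq M r k hk D i j := by
    intro i
    induction i with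
    | zero => intro j; simp [thetaSeq]
    | succ i ih =>
      intro j
      by_cases h : i < N
      · simp only [thetaSeq, dif_pos h]
        have hG : (0:ℝ) ≤ Theta M r k hk (thetaSeq M r k hk (C + D) i) ((C + D) ⟨i, h⟩) j := by
          refine le_trans ?_ (Finset.le_sup' _ (Finset.mem_filter.mpr
            ⟨Finset.mem_univ j, Nat.sub_le _ _, by omega⟩))
          positivity
        rw [abs_of_nonneg hG]
        unfold Theta
        apply Finset.sup'_le
        intro p hp
        have h1 : |thetaSeq M r k hk C i p| + |(C ⟨i, h⟩) p|
            ≤ Theta M r k hk (thetaSeq M r k hk C i) (C ⟨i, h⟩) j := by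
          unfold Theta
          exact Finset.le_sup' (fun q => |thetaSeq M r k hk C i q| + |(C ⟨i, h⟩) q|) hp
        have h2 : |thetaSeq M r k hk D i p| + |(D ⟨i, h⟩) p|
            ≤ Theta M r k hk (thetaSeq M r k hk D i) (D ⟨i, h⟩) j := by
          unfold Theta
          exact Finset.le_sup' (fun q => |thetaSeq M r k hk D i q| + |(D ⟨i, h⟩) q|) hp
        have h3 := ih p
        have h4 : |(C + D) ⟨i, h⟩ p| ≤ |(C ⟨i, h⟩) p| + |(D ⟨i, h⟩) p| := by
          simpa using abs_add_le (C ⟨i, h⟩ p) (D ⟨i, h⟩ p)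
        have h5 : |thetaSeq M r k hk (C + D) i p|
            ≤ |thetaSeq M r k hk C i p| + |thetaSeq M r k hk D i p| :=
          le_trans h3 (add_le_add (le_abs_self _) (le_abs_self _))
        unfold Theta at h1 h2
        linarith
      · simpa [thetaSeq, dif_neg h] using ih j
  intro i _ _ j
  exact le_trans (le_abs_self _) (key i j)
end
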